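/- arXiv:1905.01696 — 3 statements merged into one kernel-verified Lean document; each statement's English description precedes it below -/
import Mathlib

section
/- Let ω = Σ_{j=1}^m λ_j δ_{x_j} be a nonnegative linear combination of Dirac measures at distinct points x_j with λ_j > 0, and let I_j = v_j v_jᵀ where v_j = ∂S(x_j) ∈ ℝⁿ. If the symmetric matrices {I_j}_{j=1}^m are linearly dependent, then there exist nonnegative coefficients λ̃_j with λ̃_{j₀} = 0 for at least one index j₀, Σ_j λ̃_j I_j = Σ_j λ_j I_j, and Σ_j λ̃_j ≤ Σ_j λ_j. -/
/-!
Given a nontrivial relation `∑ cⱼ wⱼ = 0`, flip its sign so that `∑ cⱼ ≥ 0`; some `cⱼ` is then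
positive. Moving the weights along the relation, `λ - t c`, keeps `∑ λⱼ wⱼ` and does not increase
`∑ λⱼ` for `t ≥ 0`; the largest `t` keeping all weights nonnegative, `t = min {λⱼ / cⱼ | cⱼ > 0}`,
zeroes the weight at which the minimum is attained.
-/

open Finset

variable {𝕜 M ι : Type*} [Field 𝕜] [LinearOrder 𝕜] [IsStrictOrderedRing 𝕜]
  [AddCommGroup M] [Module 𝕜 M] [Fintype ι]

lemma exists_pos_of_sum_nonneg_of_ne_zero {c : ι → 𝕜} (hsum : 0 ≤ ∑ j, c j) (hc : c ≠ 0) :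
    ∃ j, 0 < c j := by
  by_contra! hnonpos
  have hzero := (sum_eq_zero_iff_of_nonpos fun j _ => hnonpos j).mp
    (le_antisymm (sum_nonpos fun j _ => hnonpos j) hsum)
  exact hc (funext fun j => hzero j (mem_univ j))

lemma exists_sparser_weights_of_relation (w : ι → M) {lam c : ι → 𝕜}
    (hlam : ∀ j, 0 ≤ lam j) (hrel : ∑ j, c j • w j = 0) (hsum : 0 ≤ ∑ j, c j)
    (hpos : ∃ j, 0 < c j) :
    ∃ lam' : ι → 𝕜, (∀ j, 0 ≤ lam' j) ∧ (∃ j₀, lam' j₀ = 0) ∧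
      ∑ j, lam' j • w j = ∑ j, lam j • w j ∧ ∑ j, lam' j ≤ ∑ j, lam j := by
  classical
  obtain ⟨j₀, hj₀, hmin⟩ := (univ.filter fun j => 0 < c j).exists_min_image
    (fun j => lam j / c j) (by simpa [Finset.Nonempty] using hpos)
  have hcj₀ : 0 < c j₀ := (mem_filter.mp hj₀).2
  set t := lam j₀ / c j₀
  have ht : 0 ≤ t := div_nonneg (hlam j₀) hcj₀.le
  refine ⟨fun j => lam j - t * c j, fun j => ?_, ⟨j₀, by simp [t, hcj₀.ne']⟩, ?_, ?_⟩
  · rcases lt_or_ge 0 (c j) with hcj | hcj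
    · have := (le_div_iff₀ hcj).mp (hmin j (by simp [hcj]))
      linarith
    · nlinarith [hlam j]
  · simp only [sub_smul, sum_sub_distrib, mul_smul, ← smul_sum, hrel, smul_zero, sub_zero]
  · simp only [sum_sub_distrib, ← mul_sum]
    nlinarith

lemma exists_sparser_weights_of_not_linearIndependent {w : ι → M} {lam : ι → 𝕜}
    (hlam : ∀ j, 0 ≤ lam j) (hdep : ¬ LinearIndependent 𝕜 w) :
    ∃ lam' : ι → 𝕜, (∀ j, 0 ≤ lam' j) ∧ (∃ j₀, lam' j₀ = 0) ∧
      ∑ j, lam' j • w j = ∑ j, lam j • w j ∧ ∑ j, lam' j ≤ ∑ j, lam j := by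
  obtain ⟨c, hrel, i, hci⟩ := Fintype.not_linearIndependent_iff.mp hdep
  have hc : c ≠ 0 := fun h => hci (congrFun h i)
  rcases le_total 0 (∑ j, c j) with hsum | hsum
  · exact exists_sparser_weights_of_relation w hlam hrel hsum
      (exists_pos_of_sum_nonneg_of_ne_zero hsum hc)
  · have hsum' : 0 ≤ ∑ j, (-c) j := by simpa using hsum
    exact exists_sparser_weights_of_relation w hlam (c := -c) (by simp [hrel]) hsum'
      (exists_pos_of_sum_nonneg_of_ne_zero hsum' (neg_ne_zero.mpr hc))

/-- Sparsification step: if the rank-one matrices `vⱼvⱼᵀ` are linearly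
dependent, the weights `λⱼ > 0` can be replaced by nonnegative weights with at
least one zero, preserving the weighted sum and not increasing the total weight. -/
theorem exists_sparser_weights {n m : ℕ} (v : Fin m → Fin n → ℝ)
    (lam : Fin m → ℝ) (hlam : ∀ j, 0 < lam j)
    (hdep : ¬ LinearIndependent ℝ (fun j : Fin m => Matrix.vecMulVec (v j) (v j))) :
    ∃ lam' : Fin m → ℝ, (∀ j, 0 ≤ lam' j) ∧ (∃ j₀, lam' j₀ = 0) ∧
      (∑ j, lam' j • Matrix.vecMulVec (v j) (v j)
        = ∑ j, lam j • Matrix.vecMulVec (v j) (v j)) ∧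
      (∑ j, lam' j ≤ ∑ j, lam j) :=
  exists_sparser_weights_of_not_linearIndependent (fun j => (hlam j).le) hdep
end

section
/- For any finite nonnegative combination Σ_{j=1}^m λ_j v_j v_jᵀ of rank-one symmetric matrices (v_j ∈ ℝⁿ, λ_j ≥ 0), there exists a subset J ⊆ {1,…,m} with |J| ≤ n(n+1)/2 and coefficients λ̃_j ≥ 0 for j ∈ J such that Σ_{j∈J} λ̃_j v_j v_jᵀ = Σ_j λ_j v_j v_jᵀ and Σ_{j∈J} λ̃_j ≤ Σ_j λ_j. -/
/-!
Conic Carathéodory with cost control. If the vectors carrying a nonnegative combination are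
linearly dependent, pick a relation `∑ μ j • w j = 0` with `∑ μ j ≥ 0` and move along it,
`c - t • μ`, until a first coefficient vanishes; this keeps the combination, does not raise the
total weight, and shrinks the support. At the end the support is linearly independent, so it has
at most `finrank` elements. The rank-one matrices `v vᵀ` all lie in the image of the linear map
`f ↦ (f s(i, j))ᵢⱼ` from functions on `Sym2 (Fin n)`, a space of dimension `n (n + 1) / 2`.
-/

open Finset Module

lemma Finset.exists_pos_of_sum_nonneg_of_exists_ne_zero {ι M : Type*} [AddCommGroup M]
    [LinearOrder M] [IsOrderedAddMonoid M] {s : Finset ι} {μ : ι → M} (hsum : 0 ≤ ∑ j ∈ s, μ j)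
    (hne : ∃ j ∈ s, μ j ≠ 0) : ∃ j ∈ s, 0 < μ j := by
  by_contra! hnonpos
  have hzero : ∑ j ∈ s, μ j = 0 := le_antisymm (sum_nonpos hnonpos) hsum
  obtain ⟨j, hj, hμj⟩ := hne
  exact hμj ((sum_eq_zero_iff_of_nonpos hnonpos).1 hzero j hj)

section Caratheodory

variable {ι 𝕜 E : Type*} [Field 𝕜] [LinearOrder 𝕜] [IsStrictOrderedRing 𝕜] [AddCommGroup E]
  [Module 𝕜 E] {w : ι → E} {s : Finset ι}

lemma exists_relation_of_not_linearIndepOn (h : ¬LinearIndepOn 𝕜 w s) :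
    ∃ μ : ι → 𝕜, ∑ j ∈ s, μ j • w j = 0 ∧ 0 ≤ ∑ j ∈ s, μ j ∧ ∃ j ∈ s, 0 < μ j := by
  obtain ⟨μ, hrel, hne⟩ := not_linearIndepOn_finset_iff.1 h
  rcases le_total 0 (∑ j ∈ s, μ j) with hsum | hsum
  · exact ⟨μ, hrel, hsum, exists_pos_of_sum_nonneg_of_exists_ne_zero hsum hne⟩
  · have hsum' : 0 ≤ ∑ j ∈ s, -μ j := by simpa using hsum
    refine ⟨-μ, by simp [hrel], hsum', exists_pos_of_sum_nonneg_of_exists_ne_zero hsum' ?_⟩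
    simpa using hne

/-- The ratio test of the simplex method: `t = min {c j / μ j | μ j > 0}`. -/
lemma exists_mul_le_of_exists_pos {c μ : ι → 𝕜} (hc : ∀ j, 0 ≤ c j) (hμ : ∃ j ∈ s, 0 < μ j) :
    ∃ t, 0 ≤ t ∧ (∀ j ∈ s, t * μ j ≤ c j) ∧ ∃ j₀ ∈ s, t * μ j₀ = c j₀ := by
  obtain ⟨j₀, hj₀, hmin⟩ := (s.filter (0 < μ ·)).exists_min_image (fun j => c j / μ j)
    (by simpa [Finset.Nonempty] using hμ)
  rw [mem_filter] at hj₀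
  refine ⟨c j₀ / μ j₀, div_nonneg (hc j₀) hj₀.2.le, fun j hj => ?_, j₀, hj₀.1,
    div_mul_cancel₀ _ hj₀.2.ne'⟩
  rcases le_or_gt (μ j) 0 with hμj | hμj
  · exact (mul_nonpos_of_nonneg_of_nonpos (div_nonneg (hc j₀) hj₀.2.le) hμj).trans (hc j)
  · exact (le_div_iff₀ hμj).1 (hmin j (mem_filter.2 ⟨hj, hμj⟩))

lemma exists_nonneg_combination_erase [DecidableEq ι] {c : ι → 𝕜} (hc : ∀ j, 0 ≤ c j)
    (h : ¬LinearIndepOn 𝕜 w s) :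
    ∃ j₀ ∈ s, ∃ c' : ι → 𝕜, (∀ j, 0 ≤ c' j) ∧
      ∑ j ∈ s.erase j₀, c' j • w j = ∑ j ∈ s, c j • w j ∧
      ∑ j ∈ s.erase j₀, c' j ≤ ∑ j ∈ s, c j := by
  obtain ⟨μ, hrel, hsum, hpos⟩ := exists_relation_of_not_linearIndepOn h
  obtain ⟨t, ht, hle, j₀, hj₀, heq⟩ := exists_mul_le_of_exists_pos hc hpos
  set c' := s.piecewise (fun j => c j - t * μ j) c
  have hc's : ∀ j ∈ s, c' j = c j - t * μ j := fun j hj => s.piecewise_eq_of_mem _ _ hj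
  have hc'j₀ : c' j₀ = 0 := by rw [hc's j₀ hj₀, heq, sub_self]
  refine ⟨j₀, hj₀, c', fun j => ?_, ?_, ?_⟩
  · by_cases hj : j ∈ s
    · exact (hc's j hj).symm ▸ sub_nonneg.2 (hle j hj)
    · exact (hc j).trans (s.piecewise_eq_of_notMem _ _ hj).ge
  · rw [sum_erase s (show c' j₀ • w j₀ = 0 by rw [hc'j₀, zero_smul])]
    calc ∑ j ∈ s, c' j • w j = ∑ j ∈ s, c j • w j - t • ∑ j ∈ s, μ j • w j := by
          rw [smul_sum, ← sum_sub_distrib]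
          exact sum_congr rfl fun j hj => by rw [hc's j hj, sub_smul, mul_smul]
      _ = ∑ j ∈ s, c j • w j := by rw [hrel, smul_zero, sub_zero]
  · rw [sum_erase s hc'j₀]
    calc ∑ j ∈ s, c' j = ∑ j ∈ s, c j - t * ∑ j ∈ s, μ j := by
          rw [mul_sum, ← sum_sub_distrib]
          exact sum_congr rfl hc's
      _ ≤ ∑ j ∈ s, c j := sub_le_self _ (mul_nonneg ht hsum)

theorem exists_linearIndepOn_nonneg_combination_le (w : ι → E) (s : Finset ι) {c : ι → 𝕜}
    (hc : ∀ j, 0 ≤ c j) :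
    ∃ t ⊆ s, ∃ c' : ι → 𝕜, LinearIndepOn 𝕜 w t ∧ (∀ j, 0 ≤ c' j) ∧
      ∑ j ∈ t, c' j • w j = ∑ j ∈ s, c j • w j ∧ ∑ j ∈ t, c' j ≤ ∑ j ∈ s, c j := by
  induction s using Finset.strongInduction generalizing c with
  | H s ih =>
    by_cases hind : LinearIndepOn 𝕜 w s
    · exact ⟨s, subset_rfl, c, hind, hc, rfl, le_rfl⟩
    classical
    obtain ⟨j₀, hj₀, c', hc', hcomb, hcost⟩ := exists_nonneg_combination_erase hc hind
    obtain ⟨t, hts, c'', hind', hc'', hcomb', hcost'⟩ := ih _ (erase_ssubset hj₀) hc'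
    exact ⟨t, hts.trans (erase_subset _ _), c'', hind', hc'', hcomb'.trans hcomb,
      hcost'.trans hcost⟩

theorem exists_nonneg_combination_card_le_finrank [FiniteDimensional 𝕜 E] (w : ι → E)
    (s : Finset ι) {c : ι → 𝕜} (hc : ∀ j, 0 ≤ c j) :
    ∃ t ⊆ s, ∃ c' : ι → 𝕜, t.card ≤ finrank 𝕜 E ∧ (∀ j, 0 ≤ c' j) ∧
      ∑ j ∈ t, c' j • w j = ∑ j ∈ s, c j • w j ∧ ∑ j ∈ t, c' j ≤ ∑ j ∈ s, c j := by
  obtain ⟨t, hts, c', hind, hc', hcomb, hcost⟩ := exists_linearIndepOn_nonneg_combination_le w s hc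
  exact ⟨t, hts, c', by simpa using hind.fintype_card_le_finrank, hc', hcomb, hcost⟩

end Caratheodory

section Sym2

variable {α R : Type*}

def Matrix.ofSym2 [Semiring R] : (Sym2 α → R) →ₗ[R] Matrix α α R where
  toFun f := Matrix.of fun i j => f s(i, j)
  map_add' _ _ := rfl
  map_smul' _ _ := rfl

def Sym2.mulSelf [CommSemiring R] (x : α → R) : Sym2 α → R :=
  Sym2.lift ⟨fun a b => x a * x b, fun _ _ => mul_comm _ _⟩

lemma Matrix.ofSym2_mulSelf [CommSemiring R] (x : α → R) :
    Matrix.ofSym2 (Sym2.mulSelf x) = Matrix.vecMulVec x x :=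
  rfl

lemma finrank_sym2_fin_fun [Semiring R] [StrongRankCondition R] (n : ℕ) :
    finrank R (Sym2 (Fin n) → R) = n * (n + 1) / 2 := by
  rw [finrank_fintype_fun_eq_card, Sym2.card, Fintype.card_fin, Nat.choose_two_right,
    Nat.add_sub_cancel, mul_comm]

end Sym2

/-- Carathéodory-type sparsification with cost control: every nonnegative
combination of rank-one symmetric matrices can be represented using at most
`n(n+1)/2` of them with no larger total weight. -/
theorem exists_sparse_representation {n m : ℕ} (v : Fin m → Fin n → ℝ)
    (lam : Fin m → ℝ) (hlam : ∀ j, 0 ≤ lam j) :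
    ∃ (J : Finset (Fin m)) (lam' : Fin m → ℝ),
      J.card ≤ n * (n + 1) / 2 ∧ (∀ j, 0 ≤ lam' j) ∧
      (∑ j ∈ J, lam' j • Matrix.vecMulVec (v j) (v j)
        = ∑ j, lam j • Matrix.vecMulVec (v j) (v j)) ∧
      (∑ j ∈ J, lam' j ≤ ∑ j, lam j) := by
  obtain ⟨J, -, lam', hcard, hlam', hcomb, hcost⟩ :=
    exists_nonneg_combination_card_le_finrank (fun j => Sym2.mulSelf (v j)) univ hlam
  refine ⟨J, lam', hcard.trans_eq (finrank_sym2_fin_fun n), hlam', ?_, hcost⟩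
  simpa only [map_sum, map_smul, Matrix.ofSym2_mulSelf] using congrArg Matrix.ofSym2 hcomb
end

section
/- Let ψ' be a continuous function on a compact metric space Ω₀ with ψ' ≤ 0, and β > 0. A finite positive Borel measure ω̄ satisfies ⟨−ψ', ω − ω̄⟩ + β‖ω̄‖ ≤ β‖ω‖ for all finite positive measures ω if and only if −ψ'(x) ≤ β for all x ∈ Ω₀ and supp ω̄ ⊆ {x ∈ Ω₀ : −ψ'(x) = β}. -/
open MeasureTheory

/-- The support of a Borel measure: points all of whose open neighborhoods have
positive measure. -/
def measureSupport {Ω : Type*} [TopologicalSpace Ω] [MeasurableSpace Ω]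
    (ω : Measure Ω) : Set Ω :=
  {x | ∀ s : Set Ω, IsOpen s → x ∈ s → 0 < ω s}

/-! With `h := -ψ' - β`, the variational inequality says that `ω̄` maximizes `ω ↦ ∫ h dω` over
finite measures. Testing against `ω̄ + δₓ` gives `h ≤ 0`, and testing against `0` gives
`∫ h dω̄ ≥ 0`, so `h = 0` `ω̄`-a.e.; as `{h = 0}` is closed, this is the support condition. -/

lemma measureSupport_eq_support {X : Type*} [TopologicalSpace X] [MeasurableSpace X]
    (μ : Measure X) : measureSupport μ = μ.support := by
  ext x
  simp only [measureSupport, Measure.support_eq_forall_isOpen, Set.mem_ofPred_eq]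
  exact forall_congr' fun _ => forall_comm

lemma MeasureTheory.Measure.support_subset_iff_mem_ae {X : Type*} [TopologicalSpace X]
    [HereditarilyLindelofSpace X] [MeasurableSpace X] {μ : Measure X} {t : Set X}
    (ht : IsClosed t) : μ.support ⊆ t ↔ t ∈ ae μ :=
  ⟨fun h => Filter.mem_of_superset Measure.support_mem_ae h,
    Measure.support_subset_of_isClosed ht⟩

theorem forall_integral_le_integral_iff {X : Type*} [MeasurableSpace X]
    [MeasurableSingletonClass X] {h : X → ℝ} {ν : Measure X} [IsFiniteMeasure ν]
    (hν : Integrable h ν) :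
    (∀ μ : Measure X, IsFiniteMeasure μ → ∫ x, h x ∂μ ≤ ∫ x, h x ∂ν) ↔
      (∀ x, h x ≤ 0) ∧ h =ᵐ[ν] 0 := by
  constructor
  · intro hmax
    have hle : ∀ x, h x ≤ 0 := fun x => by
      have := hmax (ν + Measure.dirac x) inferInstance
      rw [integral_add_measure hν (integrable_dirac enorm_lt_top), integral_dirac] at this
      linarith
    have hzero : ∫ x, h x ∂ν = 0 :=
      le_antisymm (integral_nonpos hle) (by simpa using hmax 0 inferInstance)
    refine ⟨hle, (integral_eq_iff_of_ae_le hν (integrable_zero _ _ _) (ae_of_all _ hle)).1 ?_⟩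
    simpa using hzero
  · rintro ⟨hle, hae⟩ μ -
    rw [integral_congr_ae hae]
    simpa using integral_nonpos hle

theorem optimality_condition_general {Ω : Type*} [MetricSpace Ω] [CompactSpace Ω]
    [MeasurableSpace Ω] [BorelSpace Ω]
    (ψ' : Ω → ℝ) (hc : Continuous ψ')
    (β : ℝ)
    (ωbar : Measure Ω) [IsFiniteMeasure ωbar] :
    (∀ ω : Measure Ω, IsFiniteMeasure ω →
        ((∫ x, -ψ' x ∂ω) - (∫ x, -ψ' x ∂ωbar)) + β * (ωbar Set.univ).toReal
          ≤ β * (ω Set.univ).toReal)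
      ↔ ((∀ x, -ψ' x ≤ β) ∧ measureSupport ωbar ⊆ {x | -ψ' x = β}) := by
  have hint : ∀ (μ : Measure Ω) [IsFiniteMeasure μ], Integrable (fun x => -ψ' x) μ :=
    fun μ _ => hc.neg.integrable_of_hasCompactSupport (HasCompactSupport.of_compactSpace _)
  have hshift : ∀ (μ : Measure Ω) [IsFiniteMeasure μ],
      ∫ x, -ψ' x - β ∂μ = ∫ x, -ψ' x ∂μ - β * (μ Set.univ).toReal := fun μ _ => by
    rw [integral_sub (hint μ) (integrable_const β), integral_const, smul_eq_mul, mul_comm,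
      measureReal_def]
  have hclosed : IsClosed {x | -ψ' x = β} := isClosed_eq hc.neg continuous_const
  rw [measureSupport_eq_support, Measure.support_subset_iff_mem_ae hclosed]
  calc _ ↔ ∀ ω : Measure Ω, IsFiniteMeasure ω →
        ∫ x, -ψ' x - β ∂ω ≤ ∫ x, -ψ' x - β ∂ωbar :=
        forall₂_congr fun ω _ => by rw [hshift, hshift]; constructor <;> intro <;> linarith
    _ ↔ _ := by
      rw [forall_integral_le_integral_iff (h := fun x => -ψ' x - β)
        ((hint ωbar).sub (integrable_const β))]
      simp only [sub_nonpos, Filter.EventuallyEq, Pi.zero_apply, sub_eq_zero]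
      rfl

/-- First-order optimality condition for the sparse design problem: the
variational inequality holds iff `-ψ' ≤ β` everywhere and the support of `ω̄`
is contained in the set where `-ψ' = β`. -/
theorem optimality_condition {Ω : Type*} [MetricSpace Ω] [CompactSpace Ω]
    [MeasurableSpace Ω] [BorelSpace Ω]
    (ψ' : Ω → ℝ) (hc : Continuous ψ') (hnp : ∀ x, ψ' x ≤ 0)
    (β : ℝ) (hβ : 0 < β)
    (ωbar : Measure Ω) [IsFiniteMeasure ωbar] :
    (∀ ω : Measure Ω, IsFiniteMeasure ω →
        ((∫ x, -ψ' x ∂ω) - (∫ x, -ψ' x ∂ωbar)) + β * (ωbar Set.univ).toReal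
          ≤ β * (ω Set.univ).toReal)
      ↔ ((∀ x, -ψ' x ≤ β) ∧ measureSupport ωbar ⊆ {x | -ψ' x = β}) :=
  optimality_condition_general ψ' hc β ωbar
end
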